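/- arXiv:2511.09479 — 2 statements merged into one kernel-verified Lean document; each statement's English description precedes it below -/
import Mathlib

section
/- Let (N, C, A, k) be an approval election. Call two candidates c, c' equivalent if N_c = N_{c'}, and write [c] for the equivalence class of c. If W and W' are committees of size k such that |W ∩ [c]| = |W' ∩ [c]| for every candidate c ∈ C, then for every t ∈ {1,…,k}, W satisfies t-EJR+ if and only if W' satisfies t-EJR+; in particular W satisfies EJR+ if and only if W' satisfies EJR+. -/
open Finset

/-- The set of approvers of candidate `c`. -/
def approvers {V C : Type*} [Fintype V] [DecidableEq C] (A : V → Finset C) (c : C) :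
    Finset V :=
  Finset.univ.filter fun i => c ∈ A i

/-- `W` satisfies `t`-EJR+ in the election with ballots `A` and committee size `k`:
for every candidate `c ∉ W`, every `ℓ ∈ {1,…,t}`, and every group `N' ⊆ N_c` of
approvers of `c` with `|N'| ≥ ℓ·n/k`, some voter in `N'` approves at least `ℓ`
members of `W`. -/
def satisfiesTEJRplus {V C : Type*} [Fintype V] [DecidableEq C]
    (A : V → Finset C) (k t : ℕ) (W : Finset C) : Prop :=
  ∀ c : C, c ∉ W → ∀ ℓ : ℕ, 1 ≤ ℓ → ℓ ≤ t →
    ∀ N' : Finset V, N' ⊆ approvers A c →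
      ((ℓ : ℚ) * (Fintype.card V : ℚ)) / (k : ℚ) ≤ (N'.card : ℚ) →
      ∃ i ∈ N', ℓ ≤ (A i ∩ W).card

/-- `W` satisfies JR iff it satisfies `1`-EJR+. -/
def satisfiesJR {V C : Type*} [Fintype V] [DecidableEq C]
    (A : V → Finset C) (k : ℕ) (W : Finset C) : Prop :=
  satisfiesTEJRplus A k 1 W

/-- The equivalence class of candidate `c`: all candidates with the same approver set. -/
def eqClass {V C : Type*} [Fintype V] [Fintype C] [DecidableEq V] [DecidableEq C]
    (A : V → Finset C) (c : C) : Finset C :=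
  Finset.univ.filter fun c' => approvers A c' = approvers A c

lemma mem_approvers {V C : Type*} [Fintype V] [DecidableEq C] (A : V → Finset C)
    (c : C) (i : V) : i ∈ approvers A c ↔ c ∈ A i := by
  simp [approvers]

lemma inter_card_eq {V C : Type*} [Fintype V] [Fintype C] [DecidableEq V] [DecidableEq C]
    (A : V → Finset C) (W W' : Finset C)
    (hmult : ∀ c : C, (W ∩ eqClass A c).card = (W' ∩ eqClass A c).card)
    (i : V) : (A i ∩ W).card = (A i ∩ W').card := by
  have h1 : ∀ (U : Finset C) (c₀ : C),
      (A i ∩ U).filter (fun c' => approvers A c' = approvers A c₀)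
        = if i ∈ approvers A c₀ then U ∩ eqClass A c₀ else ∅ := by
    intro U c₀
    split_ifs with h
    · ext c'
      simp only [Finset.mem_filter, Finset.mem_inter, eqClass, Finset.mem_univ, true_and]
      constructor
      · rintro ⟨⟨-, hU⟩, heq⟩; exact ⟨hU, heq⟩
      · rintro ⟨hU, heq⟩
        exact ⟨⟨(mem_approvers A c' i).mp (heq ▸ h), hU⟩, heq⟩
    · ext c'
      simp only [Finset.mem_filter, Finset.mem_inter, Finset.notMem_empty, iff_false]
      rintro ⟨⟨hAi, -⟩, heq⟩
      exact h (heq ▸ (mem_approvers A c' i).mpr hAi)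
  have h2 : ∀ c₀ : C,
      ((A i ∩ W).filter (fun c' => approvers A c' = approvers A c₀)).card
        = ((A i ∩ W').filter (fun c' => approvers A c' = approvers A c₀)).card := by
    intro c₀
    rw [h1 W c₀, h1 W' c₀]
    split
    · exact hmult c₀
    · rfl
  rw [Finset.card_eq_sum_card_fiberwise (f := approvers A)
      (t := Finset.univ.image (approvers A)) (fun c _ => Finset.mem_image_of_mem _ (mem_univ c)),
    Finset.card_eq_sum_card_fiberwise (f := approvers A)
      (t := Finset.univ.image (approvers A)) (fun c _ => Finset.mem_image_of_mem _ (mem_univ c))]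
  refine Finset.sum_congr rfl fun S hS => ?_
  obtain ⟨c₀, -, rfl⟩ := Finset.mem_image.mp hS
  exact h2 c₀

lemma dir {V C : Type*} [Fintype V] [Fintype C] [DecidableEq V] [DecidableEq C]
    (A : V → Finset C) (k t : ℕ) (W W' : Finset C)
    (hmult : ∀ c : C, (W ∩ eqClass A c).card = (W' ∩ eqClass A c).card)
    (h : satisfiesTEJRplus A k t W) : satisfiesTEJRplus A k t W' := by
  intro c hc ℓ h1 h2 N' hN' hcard
  have hcE : c ∈ eqClass A c := by simp [eqClass]
  obtain ⟨c₂, hc₂W, hc₂eq⟩ : ∃ c₂, c₂ ∉ W ∧ approvers A c₂ = approvers A c := by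
    by_cases hcW : c ∈ W
    · by_contra hcon
      push_neg at hcon
      have hsub : W' ∩ eqClass A c ⊆ W ∩ eqClass A c := by
        intro x hx
        rw [Finset.mem_inter] at hx ⊢
        have hxE := hx.2
        rw [eqClass, Finset.mem_filter] at hxE
        exact ⟨by_contra fun hxW => hcon x hxW hxE.2, hx.2⟩
      have := Finset.eq_of_subset_of_card_le hsub (hmult c).le
      have hcW' : c ∈ W' ∩ eqClass A c := by
        rw [this]; exact Finset.mem_inter.mpr ⟨hcW, hcE⟩
      exact hc (Finset.mem_inter.mp hcW').1
    · exact ⟨c, hcW, rfl⟩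
  obtain ⟨i, hi, hℓ⟩ := h c₂ hc₂W ℓ h1 h2 N' (fun x hx => hc₂eq ▸ hN' hx) hcard
  exact ⟨i, hi, hℓ.trans_eq (inter_card_eq A W W' hmult i)⟩

/-- If two size-`k` committees `W, W'` contain the same number of candidates from each
equivalence class `[c]` (candidates are equivalent if they have the same approver set),
then for every `t ∈ {1,…,k}`, `W` satisfies `t`-EJR+ iff `W'` does; in particular `W`
satisfies EJR+ (i.e. `k`-EJR+) iff `W'` does. -/
theorem stmt4 {V C : Type*} [Fintype V] [Fintype C] [DecidableEq V] [DecidableEq C]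
    (A : V → Finset C) (k : ℕ) (W W' : Finset C)
    (hW : W.card = k) (hW' : W'.card = k)
    (hmult : ∀ c : C, (W ∩ eqClass A c).card = (W' ∩ eqClass A c).card) :
    (∀ t : ℕ, 1 ≤ t → t ≤ k →
        (satisfiesTEJRplus A k t W ↔ satisfiesTEJRplus A k t W')) ∧
      (satisfiesTEJRplus A k k W ↔ satisfiesTEJRplus A k k W') := by
  have hmult' : ∀ c : C, (W' ∩ eqClass A c).card = (W ∩ eqClass A c).card :=
    fun c => (hmult c).symm
  refine ⟨fun t _ _ => ⟨dir A k t W W' hmult, dir A k t W' W hmult'⟩,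
    ⟨dir A k k W W' hmult, dir A k k W' W hmult'⟩⟩
end

section
/- Let φ = C_1 ∧ … ∧ C_m be a Boolean formula in conjunctive normal form in which every clause contains exactly three literals and every literal appears in exactly two clauses (i.e., for each variable x, the literal x occurs exactly twice in φ and the literal ¬x occurs exactly twice in φ). Construct the graph G whose vertices are the literal occurrences of φ, where a vertex arising from clause C_i is assigned color i, and where two vertices are joined by an edge if and only if their literals are complementary (one is the negation of the other). Then: (i) G is 2-regular, has an even number of vertices, and every color class contains exactly three vertices; and (ii) φ is satisfiable if and only if G contains an independent set that includes at least one vertex of every color. -/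
open Finset

/-- The graph on the literal occurrences of a 3-CNF formula (clause `i`, position `j`),
with an edge between two occurrences iff their literals are complementary. A literal is
a pair of a variable and a polarity. -/
def litGraph {ν : Type*} (m : ℕ) (clauses : Fin m → Fin 3 → ν × Bool) :
    SimpleGraph (Fin m × Fin 3) :=
  SimpleGraph.fromRel fun v w =>
    (clauses v.1 v.2).1 = (clauses w.1 w.2).1 ∧
    (clauses v.1 v.2).2 = !(clauses w.1 w.2).2

instance {ν : Type*} [DecidableEq ν] (m : ℕ) (clauses : Fin m → Fin 3 → ν × Bool) :
    DecidableRel (litGraph m clauses).Adj := fun v w =>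
  decidable_of_iff' _ (SimpleGraph.fromRel_adj _ v w)

/-- Correctness of the reduction from (3,B2)-Satisfiability to Multicolor Independent
Set: if every clause of `φ` has exactly three literals and every literal occurs exactly
twice, then the graph `litGraph` on literal occurrences (colored by their clause) is
2-regular, has an even number of vertices, and has exactly three vertices of each
color; and `φ` is satisfiable iff `litGraph` has an independent set containing at
least one vertex of every color. -/
theorem stmt11 {ν : Type*} [DecidableEq ν] (m : ℕ)
    (clauses : Fin m → Fin 3 → ν × Bool)
    (htwice : ∀ (x : ν) (b : Bool),
      (Finset.univ.filter fun p : Fin m × Fin 3 => clauses p.1 p.2 = (x, b)).card = 2) :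
    ((∀ v : Fin m × Fin 3, (litGraph m clauses).degree v = 2) ∧
      Even (Fintype.card (Fin m × Fin 3)) ∧
      (∀ i : Fin m,
        (Finset.univ.filter fun p : Fin m × Fin 3 => p.1 = i).card = 3)) ∧
    ((∃ σ : ν → Bool, ∀ i : Fin m, ∃ j : Fin 3,
        σ (clauses i j).1 = (clauses i j).2) ↔
      ∃ I : Finset (Fin m × Fin 3),
        (∀ v ∈ I, ∀ w ∈ I, ¬ (litGraph m clauses).Adj v w) ∧
        ∀ i : Fin m, ∃ j : Fin 3, (i, j) ∈ I) := by
  classical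
  have hadj : ∀ v w : Fin m × Fin 3, (litGraph m clauses).Adj v w ↔
      (clauses v.1 v.2).1 = (clauses w.1 w.2).1 ∧
      (clauses v.1 v.2).2 = !(clauses w.1 w.2).2 := by
    intro v w
    rw [litGraph, SimpleGraph.fromRel_adj]
    constructor
    · rintro ⟨hne, h | h⟩
      · exact h
      · exact ⟨h.1.symm, by cases hb : (clauses w.1 w.2).2 <;> simp_all⟩
    · intro h
      refine ⟨?_, Or.inl h⟩
      rintro rfl
      simp at h
  constructor
  · refine ⟨?_, ?_, ?_⟩
    · intro v
      have hset : (litGraph m clauses).neighborFinset v =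
          univ.filter (fun w : Fin m × Fin 3 =>
            clauses w.1 w.2 = ((clauses v.1 v.2).1, !(clauses v.1 v.2).2)) := by
        ext w
        rw [SimpleGraph.mem_neighborFinset, hadj, Finset.mem_filter, Prod.ext_iff]
        constructor
        · rintro ⟨h1, h2⟩
          exact ⟨Finset.mem_univ _, h1.symm, by cases hb : (clauses v.1 v.2).2 <;> simp_all⟩
        · rintro ⟨-, h1, h2⟩
          exact ⟨h1.symm, by cases hb : (clauses v.1 v.2).2 <;> simp_all⟩
      rw [SimpleGraph.degree, hset, htwice]
    · have hcard : Fintype.card (Fin m × Fin 3) =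
          ∑ y ∈ (Finset.univ.image fun p : Fin m × Fin 3 => clauses p.1 p.2),
            (Finset.univ.filter fun p : Fin m × Fin 3 => clauses p.1 p.2 = y).card := by
        rw [← Finset.card_univ]
        exact Finset.card_eq_sum_card_image _ _
      have hsum : ∑ y ∈ (Finset.univ.image fun p : Fin m × Fin 3 => clauses p.1 p.2),
          (Finset.univ.filter fun p : Fin m × Fin 3 => clauses p.1 p.2 = y).card =
          ∑ _y ∈ (Finset.univ.image fun p : Fin m × Fin 3 => clauses p.1 p.2), 2 :=
        Finset.sum_congr rfl fun y _ => by simpa using htwice y.1 y.2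
      rw [hcard, hsum, Finset.sum_const, smul_eq_mul]
      exact even_two.mul_left _
    · intro i
      have : (Finset.univ.filter fun p : Fin m × Fin 3 => p.1 = i) =
          ({i} : Finset (Fin m)) ×ˢ (Finset.univ : Finset (Fin 3)) := by
        ext p
        rw [Finset.mem_filter, Finset.mem_product]
        simp
      rw [this, Finset.card_product]
      simp
  · constructor
    · rintro ⟨σ, hσ⟩
      choose f hf using hσ
      refine ⟨Finset.univ.image fun i => (i, f i), ?_, fun i =>
        ⟨f i, Finset.mem_image_of_mem _ (Finset.mem_univ i)⟩⟩
      intro v hv w hw hvw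
      obtain ⟨i, -, rfl⟩ := Finset.mem_image.1 hv
      obtain ⟨i', -, rfl⟩ := Finset.mem_image.1 hw
      rw [hadj] at hvw
      have h1 := hf i
      have h2 := hf i'
      rw [hvw.1] at h1
      rw [h2] at h1
      rw [h1] at hvw
      simp at hvw
    · rintro ⟨I, hind, hcov⟩
      refine ⟨fun x => decide (∃ p ∈ I, clauses p.1 p.2 = (x, true)), fun i => ?_⟩
      obtain ⟨j, hj⟩ := hcov i
      refine ⟨j, ?_⟩
      cases hb : (clauses i j).2 with
      | true =>
        simp only [decide_eq_true_eq]
        exact ⟨(i, j), hj, by simp [Prod.ext_iff, hb]⟩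
      | false =>
        refine decide_eq_false ?_
        rintro ⟨p, hp, hpc⟩
        refine hind (i, j) hj p hp ?_
        rw [hadj]
        rw [hpc]
        exact ⟨rfl, by simp [hb]⟩
end
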